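/- Let H be a real Hilbert space, T > 0, Ψ : H → (-∞,∞] proper l.s.c. convex whose subdifferential is T-monotone with respect to a closed convex cone K, i.e. (z₁* - z₂*, (z₁ - z₂) - π_K(z₁ - z₂))_H ≥ 0 for all [zᵢ, zᵢ*] ∈ ∂Ψ. Suppose for k = 1, 2, U^k ∈ W^{1,2}(0,T;H) solves (U^k)'(t) + ∂Ψ(U^k(t)) ∋ Θ^k(t) in H for a.e. t ∈ (0,T), with U^k(0) = U₀^k. Writing P(w) := w - π_K(w), it holds for all t ∈ [0,T]: |P(U¹ - U²)(t)|_H² ≤ e^t |P(U₀¹ - U₀²)|_H² + ∫₀^t e^{t-τ} |P(Θ¹ - Θ²)(τ)|_H² dτ. -/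

import Mathlib

noncomputable section
open MeasureTheory Filter Topology Set Metric
open scoped RealInnerProductSpace ENNReal NNReal

abbrev Euc (n : ℕ) := EuclideanSpace ℝ (Fin n)

def divg {n : ℕ} (ψ : Euc n → Euc n) (x : Euc n) : ℝ :=
  ∑ i, ⟪fderiv ℝ ψ x (EuclideanSpace.single i 1), EuclideanSpace.single i 1⟫

def IsTestVF {n : ℕ} (U : Set (Euc n)) (ψ : Euc n → Euc n) : Prop :=
  ContDiff ℝ (⊤ : ℕ∞) ψ ∧ HasCompactSupport ψ ∧ tsupport ψ ⊆ U

def HasWeakGradOn {n : ℕ} (u : Euc n → ℝ) (G : Euc n → Euc n) (U : Set (Euc n)) : Prop :=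
  ∀ ψ : Euc n → Euc n, IsTestVF U ψ →
    ∫ x in U, u x * divg ψ x = - ∫ x in U, ⟪G x, ψ x⟫

def TraceEq {n : ℕ} (Ω : Set (Euc n)) (μΓ : Measure (Euc n)) (nΓ : Euc n → Euc n)
    (u : Euc n → ℝ) (G : Euc n → Euc n) (uΓ : Euc n → ℝ) : Prop :=
  ∀ ψ : Euc n → Euc n, ContDiff ℝ (⊤ : ℕ∞) ψ → HasCompactSupport ψ →
    ∫ x, uΓ x * ⟪ψ x, nΓ x⟫ ∂μΓ =
      (∫ x in Ω, u x * divg ψ x) + ∫ x in Ω, ⟪G x, ψ x⟫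

def BVTraceEq {n : ℕ} (Ω : Set (Euc n)) (μΓ : Measure (Euc n)) (nΓ : Euc n → Euc n)
    (u : Euc n → ℝ) (ν : Measure (Euc n)) (σ : Euc n → Euc n) (uΓ : Euc n → ℝ) : Prop :=
  ∀ ψ : Euc n → Euc n, ContDiff ℝ (⊤ : ℕ∞) ψ → HasCompactSupport ψ →
    ∫ x, uΓ x * ⟪ψ x, nΓ x⟫ ∂μΓ =
      (∫ x in Ω, u x * divg ψ x) + ∫ x, ⟪σ x, ψ x⟫ ∂ν

def tangDiv {n : ℕ} (nΓ : Euc n → Euc n) (ψ : Euc n → Euc n) (x : Euc n) : ℝ :=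
  divg ψ x - ⟪fderiv ℝ ψ x (nΓ x), nΓ x⟫

def HasSurfGrad {n : ℕ} (Γ : Set (Euc n)) (μΓ : Measure (Euc n)) (nΓ : Euc n → Euc n)
    (u : Euc n → ℝ) (G : Euc n → Euc n) : Prop :=
  ∀ ψ : Euc n → Euc n, ContDiff ℝ (⊤ : ℕ∞) ψ → HasCompactSupport ψ →
    (∀ x ∈ Γ, ⟪ψ x, nΓ x⟫ = 0) →
    ∫ x, u x * tangDiv nΓ ψ x ∂μΓ = - ∫ x, ⟪G x, ψ x⟫ ∂μΓ

def GaussGreen {n : ℕ} (Ω : Set (Euc n)) (μΓ : Measure (Euc n)) (nΓ : Euc n → Euc n) : Prop :=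
  ∀ v : Euc n → ℝ, ContDiff ℝ (⊤ : ℕ∞) v → ∀ ψ : Euc n → Euc n, ContDiff ℝ (⊤ : ℕ∞) ψ → HasCompactSupport ψ →
    ∫ x, v x * ⟪ψ x, nΓ x⟫ ∂μΓ =
      (∫ x in Ω, v x * divg ψ x) + ∫ x in Ω, ⟪gradient v x, ψ x⟫

def PhiStar {n : ℕ} (Ω : Set (Euc n)) (μΓ : Measure (Euc n)) (nΓ : Euc n → Euc n) (ε : ℝ)
    (w wΓ : Euc n → ℝ) : ℝ≥0∞ :=
  (⨆ ψ : {ψ : Euc n → Euc n // ContDiff ℝ (⊤ : ℕ∞) ψ ∧ HasCompactSupport ψ ∧ ∀ x, ‖ψ x‖ ≤ 1},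
    ENNReal.ofReal ((∫ x in Ω, w x * divg ψ.1 x) - ∫ x, wΓ x * ⟪ψ.1 x, nΓ x⟫ ∂μΓ))
  + ⨆ ψ : {ψ : Euc n → Euc n // ContDiff ℝ (⊤ : ℕ∞) ψ ∧ HasCompactSupport ψ ∧
        ∀ x ∈ frontier Ω, ⟪ψ x, nΓ x⟫ = 0},
    ENNReal.ofReal (ε^2/2 * (2 * ∫ x, wΓ x * tangDiv nΓ ψ.1 x ∂μΓ - ∫ x, ‖ψ.1 x‖^2 ∂μΓ))

def PhiReg {n : ℕ} (Ω : Set (Euc n)) (μΓ : Measure (Euc n)) (nΓ : Euc n → Euc n) (ε : ℝ)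
    (f : Euc n → ℝ) (κ : ℝ) (w wΓ : Euc n → ℝ) : ℝ≥0∞ :=
  sInf {e : ℝ≥0∞ | ∃ G GΓ : Euc n → Euc n,
    HasWeakGradOn w G Ω ∧ MemLp w 2 (volume.restrict Ω) ∧ MemLp G 2 (volume.restrict Ω) ∧
    TraceEq Ω μΓ nΓ w G wΓ ∧
    HasSurfGrad (frontier Ω) μΓ nΓ wΓ GΓ ∧ MemLp wΓ 2 μΓ ∧ MemLp GΓ 2 μΓ ∧
    e = ENNReal.ofReal ((∫ x in Ω, (f (G x) + κ^2/2 * ‖G x‖^2)) +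
          ε^2/2 * ∫ x, ‖GΓ x‖^2 ∂μΓ)}

def HasLipschitzBoundary {d : ℕ} (Ω : Set (Euc (d+1))) : Prop :=
  ∀ x ∈ frontier Ω, ∃ (r : ℝ), 0 < r ∧ ∃ (e : Euc (d+1) ≃ₗᵢ[ℝ] Euc (d+1)) (c : Euc (d+1))
      (L : ℝ≥0) (f : Euc d → ℝ), LipschitzWith L f ∧
    Ω ∩ ball x r = {y | f (WithLp.toLp 2 (fun i => e (y - c) i.castSucc)) < e (y - c) (Fin.last d)} ∩ ball x r

def ProperFn {X : Type*} (Ψ : X → EReal) : Prop := (∃ z, Ψ z ≠ ⊤) ∧ ∀ z, Ψ z ≠ ⊥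

def ConvexFn {X : Type*} [AddCommGroup X] [Module ℝ X] (Ψ : X → EReal) : Prop :=
  ∀ z w : X, ∀ t : ℝ, 0 ≤ t → t ≤ 1 →
    Ψ (t • z + (1 - t) • w) ≤ (t : EReal) * Ψ z + ((1 - t : ℝ) : EReal) * Ψ w

def InSubdiff {X : Type*} [NormedAddCommGroup X] [InnerProductSpace ℝ X]
    (Ψ : X → EReal) (z zs : X) : Prop :=
  Ψ z ≠ ⊤ ∧ ∀ w : X, ((⟪zs, w - z⟫ : ℝ) : EReal) + Ψ z ≤ Ψ w

def MoscoConv {X : Type*} [NormedAddCommGroup X] [InnerProductSpace ℝ X]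
    (Ψn : ℕ → X → EReal) (Ψ : X → EReal) : Prop :=
  (∀ (z : X) (zn : ℕ → X),
      (∀ y : X, Tendsto (fun k => (⟪zn k, y⟫ : ℝ)) atTop (𝓝 ⟪z, y⟫)) →
      Ψ z ≤ Filter.liminf (fun k => Ψn k (zn k)) atTop) ∧
  (∀ z : X, Ψ z ≠ ⊤ → ∃ zn : ℕ → X, Tendsto zn atTop (𝓝 z) ∧
      Tendsto (fun k => Ψn k (zn k)) atTop (𝓝 (Ψ z)))

def Euc.init {d : ℕ} (x : Euc (d+1)) : Euc d := WithLp.toLp 2 (fun i => x i.castSucc)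

def Euc.snoc {d : ℕ} (ξ : Euc d) (t : ℝ) : Euc (d+1) := WithLp.toLp 2 (Fin.snoc (α := fun _ => ℝ) ξ.ofLp t)

def eTV {n : ℕ} (u : Euc n → ℝ) (U : Set (Euc n)) : ℝ≥0∞ :=
  ⨆ ψ : {ψ : Euc n → Euc n // IsTestVF U ψ ∧ ∀ x, ‖ψ x‖ ≤ 1},
    ENNReal.ofReal (∫ x in U, u x * divg ψ.1 x)

def IsBVRep {n : ℕ} (U : Set (Euc n)) (u : Euc n → ℝ) (ν : Measure (Euc n))
    (σ : Euc n → Euc n) : Prop :=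
  (∀ᵐ x ∂ν, ‖σ x‖ = 1) ∧
  ∀ ψ : Euc n → Euc n, IsTestVF U ψ →
    ∫ x in U, u x * divg ψ x = - ∫ x, ⟪σ x, ψ x⟫ ∂ν

section Proj
variable {H : Type*} [NormedAddCommGroup H] [InnerProductSpace ℝ H]

theorem proj_varineq {K : Set H} (hKconv : Convex ℝ K) {π : H → H}
    (hπ : ∀ x : H, π x ∈ K ∧ ∀ y ∈ K, ‖x - π x‖ ≤ ‖x - y‖)
    (x : H) {y : H} (hy : y ∈ K) : ⟪x - π x, y - π x⟫ ≤ 0 := by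
  set u := x - π x with hu
  set d := y - π x with hd
  have key : ∀ t : ℝ, 0 < t → t ≤ 1 → 2 * t * ⟪u, d⟫ ≤ t ^ 2 * ‖d‖ ^ 2 := by
    intro t ht0 ht1
    have hz : (1 - t) • π x + t • y ∈ K := hKconv (hπ x).1 hy (by linarith) ht0.le (by ring)
    have h1 : ‖x - π x‖ ≤ ‖x - ((1 - t) • π x + t • y)‖ := (hπ x).2 _ hz
    have h2 : x - ((1 - t) • π x + t • y) = u - t • d := by
      rw [hu, hd]; module
    have h3 : ‖u‖ ^ 2 ≤ ‖u - t • d‖ ^ 2 := by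
      rw [← h2]
      exact pow_le_pow_left₀ (norm_nonneg _) h1 2
    have h4 : ‖u - t • d‖ ^ 2 = ‖u‖ ^ 2 - 2 * (t * ⟪u, d⟫) + t ^ 2 * ‖d‖ ^ 2 := by
      rw [norm_sub_sq_real, real_inner_smul_right, norm_smul]
      rw [Real.norm_eq_abs, abs_of_pos ht0, mul_pow]
    nlinarith
  by_contra hc
  push_neg at hc
  set c := ⟪u, d⟫ with hcdef
  have hc0 : 0 < c := hc
  set t := min 1 (c / (‖d‖ ^ 2 + 1)) with htdef
  have hd1 : (0:ℝ) < ‖d‖ ^ 2 + 1 := by positivity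
  have ht0 : 0 < t := lt_min one_pos (by positivity)
  have ht1 : t ≤ 1 := min_le_left _ _
  have hkey := key t ht0 ht1
  have htle : t ≤ c / (‖d‖ ^ 2 + 1) := min_le_right _ _
  have h5 : t * ‖d‖ ^ 2 < c := by
    calc t * ‖d‖ ^ 2 ≤ (c / (‖d‖ ^ 2 + 1)) * ‖d‖ ^ 2 := by
          apply mul_le_mul_of_nonneg_right htle (by positivity)
      _ < c := by
          rw [div_mul_eq_mul_div, div_lt_iff₀ hd1]
          nlinarith
  nlinarith [sq_nonneg t, mul_pos ht0 hc0]

theorem proj_lip {K : Set H} (hKconv : Convex ℝ K) {π : H → H}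
    (hπ : ∀ x : H, π x ∈ K ∧ ∀ y ∈ K, ‖x - π x‖ ≤ ‖x - y‖)
    (a b : H) : ‖π a - π b‖ ≤ ‖a - b‖ := by
  set s := π a - π b with hs
  have h1 : ⟪a - π a, π b - π a⟫ ≤ 0 := proj_varineq hKconv hπ a (hπ b).1
  have h2 : ⟪b - π b, π a - π b⟫ ≤ 0 := proj_varineq hKconv hπ b (hπ a).1
  have h1' : 0 ≤ ⟪a - π a, s⟫ := by
    have : π b - π a = -s := by rw [hs]; abel
    rw [this, inner_neg_right] at h1; linarith
  have e : ⟪(a - b) - s, s⟫ = ⟪a - π a, s⟫ - ⟪b - π b, s⟫ := by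
    rw [← inner_sub_left]; congr 1; rw [hs]; abel
  have e2 : ⟪(a - b) - s, s⟫ = ⟪a - b, s⟫ - ‖s‖ ^ 2 := by
    rw [inner_sub_left, real_inner_self_eq_norm_sq]
  have key : ‖s‖ ^ 2 ≤ ⟪a - b, s⟫ := by nlinarith
  have hle := le_trans key (real_inner_le_norm (a - b) s)
  rcases eq_or_lt_of_le (norm_nonneg s) with h | h
  · rw [← h]; exact norm_nonneg _
  · have : ‖s‖ * ‖s‖ ≤ ‖a - b‖ * ‖s‖ := by nlinarith
    exact le_of_mul_le_mul_right this h

theorem proj_polar {K : Set H} (hKconv : Convex ℝ K) (hK0 : (0:H) ∈ K)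
    (hKcone : ∀ c : ℝ, 0 ≤ c → ∀ x ∈ K, c • x ∈ K) {π : H → H}
    (hπ : ∀ x : H, π x ∈ K ∧ ∀ y ∈ K, ‖x - π x‖ ≤ ‖x - y‖)
    (x : H) {y : H} (hy : y ∈ K) : ⟪x - π x, y⟫ ≤ 0 := by
  have hmem : π x + y ∈ K := by
    have h1 : (1/2 : ℝ) • π x + (1/2 : ℝ) • y ∈ K :=
      hKconv (hπ x).1 hy (by norm_num) (by norm_num) (by norm_num)
    have h2 := hKcone 2 (by norm_num) _ h1
    have : (2:ℝ) • ((1/2 : ℝ) • π x + (1/2 : ℝ) • y) = π x + y := by module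
    rwa [this] at h2
  have := proj_varineq hKconv hπ x hmem
  have e : π x + y - π x = y := by abel
  rwa [e] at this

theorem proj_zero {K : Set H} (hK0 : (0:H) ∈ K) {π : H → H}
    (hπ : ∀ x : H, π x ∈ K ∧ ∀ y ∈ K, ‖x - π x‖ ≤ ‖x - y‖) : π 0 = 0 := by
  have h := (hπ 0).2 0 hK0
  simp only [sub_zero, zero_sub, norm_neg, norm_zero] at h
  have : ‖π 0‖ = 0 := le_antisymm h (norm_nonneg _)
  simpa [norm_eq_zero] using this

theorem proj_A4 {K : Set H} {π : H → H}
    (hπ : ∀ x : H, π x ∈ K ∧ ∀ y ∈ K, ‖x - π x‖ ≤ ‖x - y‖) (a b : H) :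
    ‖a - π a‖ ^ 2 ≤ ‖b - π b‖ ^ 2 + 2 * ⟪b - π b, a - b⟫ + ‖a - b‖ ^ 2 := by
  have h1 : ‖a - π a‖ ≤ ‖a - π b‖ := (hπ a).2 _ (hπ b).1
  have h2 : ‖a - π a‖ ^ 2 ≤ ‖a - π b‖ ^ 2 := pow_le_pow_left₀ (norm_nonneg _) h1 2
  have e : a - π b = (b - π b) + (a - b) := by abel
  rw [e, norm_add_sq_real] at h2
  linarith
end Proj

theorem exp_neg_Ioc_integral {a b : ℝ} (hab : a ≤ b) :
    ∫ τ in Ioc a b, Real.exp (-τ) = Real.exp (-a) - Real.exp (-b) := by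
  rw [← intervalIntegral.integral_of_le hab]
  have key : ∀ τ ∈ uIcc a b, HasDerivAt (fun u => -Real.exp (-u)) (Real.exp (-τ)) τ := by
    intro τ _
    have h1 : HasDerivAt (fun u : ℝ => Real.exp (-u)) (Real.exp (-τ) * (-1)) τ :=
      (Real.hasDerivAt_exp (-τ)).comp τ (hasDerivAt_neg τ)
    have := h1.neg
    simp only [mul_neg, mul_one, neg_neg] at this
    exact this
  have hint : IntervalIntegrable (fun τ => Real.exp (-τ)) volume a b :=
    (Real.continuous_exp.comp continuous_neg).intervalIntegrable a b
  rw [intervalIntegral.integral_eq_sub_of_hasDerivAt key hint]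
  ring

theorem cs_sq {a b : ℝ} (hab : a ≤ b) {u : ℝ → ℝ} (hu : IntegrableOn u (Ioc a b))
    (hu2 : IntegrableOn (fun σ => (u σ)^2) (Ioc a b)) (hupos : ∀ σ, 0 ≤ u σ) :
    (∫ σ in Ioc a b, u σ)^2 ≤ (b - a) * ∫ σ in Ioc a b, (u σ)^2 := by
  set A := ∫ σ in Ioc a b, u σ with hA
  set B := ∫ σ in Ioc a b, (u σ)^2 with hB
  have hconst : IntegrableOn (fun _ : ℝ => (1:ℝ)) (Ioc a b) :=
    integrableOn_const (by simp [Real.volume_Ioc]) (by simp)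
  have hL : ∫ σ in Ioc a b, (1:ℝ) = b - a := by
    simp [Real.volume_Ioc, ENNReal.toReal_ofReal (sub_nonneg.2 hab), hab]
  have hBnn : 0 ≤ B := setIntegral_nonneg measurableSet_Ioc (fun σ _ => sq_nonneg _)
  have quad : ∀ x : ℝ, 0 ≤ x^2 * B - 2 * x * A + (b - a) := by
    intro x
    have hint1 : IntegrableOn (fun σ => x^2 * (u σ)^2 - 2 * x * u σ) (Ioc a b) := by
      exact (hu2.const_mul (x^2)).sub (hu.const_mul (2*x))
    have h0 : 0 ≤ ∫ σ in Ioc a b, (x^2 * (u σ)^2 - 2 * x * u σ + 1) := by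
      have : ∀ σ, 0 ≤ x^2 * (u σ)^2 - 2 * x * u σ + 1 := by
        intro σ; nlinarith [sq_nonneg (x * u σ - 1)]
      exact setIntegral_nonneg measurableSet_Ioc (fun σ _ => this σ)
    rw [integral_add hint1 hconst,
      integral_sub (hu2.const_mul (x^2)) (hu.const_mul (2*x)),
      integral_const_mul, integral_const_mul, hL] at h0
    linarith
  rcases eq_or_lt_of_le hBnn with hB0 | hB0
  · have hu20 := (integral_eq_zero_iff_of_nonneg (fun σ => sq_nonneg (u σ)) hu2).1 hB0.symm
    have hu0 : ∀ᵐ σ ∂(volume.restrict (Ioc a b)), u σ = 0 := by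
      filter_upwards [hu20] with σ hσ
      have : (u σ)^2 = 0 := hσ
      exact pow_eq_zero_iff (n := 2) (by norm_num) |>.1 this
    have hA0 : A = 0 := by
      rw [hA, integral_congr_ae hu0, integral_zero]
    rw [hA0, ← hB0]; norm_num
  · set x := A / B with hxdef
    have hx : x * B = A := div_mul_cancel₀ A hB0.ne'
    have h4 : 0 ≤ (x^2 * B - 2 * x * A + (b - a)) * B := mul_nonneg (quad x) hBnn
    have e : (x^2 * B - 2 * x * A + (b - a)) * B
        = (b - a) * B - (x * B)^2 := by rw [← hx]; ring
    rw [e, hx] at h4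
    linarith

theorem sum_Ioc {E : Type*} [NormedAddCommGroup E] [NormedSpace ℝ E]
    (F : ℝ → E) (p : ℕ → ℝ) (hp : Monotone p) (N : ℕ)
    (hF : IntegrableOn F (Ioc (p 0) (p N))) :
    ∑ i ∈ Finset.range N, ∫ τ in Ioc (p i) (p (i+1)), F τ = ∫ τ in Ioc (p 0) (p N), F τ := by
  induction N with
  | zero => simp
  | succ n ih =>
    have hsub : Ioc (p 0) (p n) ⊆ Ioc (p 0) (p (n+1)) :=
      Ioc_subset_Ioc le_rfl (hp (Nat.le_succ n))
    have hsub2 : Ioc (p n) (p (n+1)) ⊆ Ioc (p 0) (p (n+1)) :=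
      Ioc_subset_Ioc (hp (Nat.zero_le n)) le_rfl
    rw [Finset.sum_range_succ, ih (hF.mono_set hsub)]
    rw [← setIntegral_union (Ioc_disjoint_Ioc_of_le le_rfl) measurableSet_Ioc
      (hF.mono_set hsub) (hF.mono_set hsub2)]
    rw [Ioc_union_Ioc_eq_Ioc (hp (Nat.zero_le n)) (hp (Nat.le_succ n))]

theorem fubini_exp {t : ℝ} (ht : 0 ≤ t) {g : ℝ → ℝ} (hg : IntegrableOn g (Ioc 0 t)) :
    ∫ τ in Ioc 0 t, Real.exp (-τ) * (∫ σ in Ioc 0 τ, g σ)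
      = ∫ σ in Ioc 0 t, (Real.exp (-σ) - Real.exp (-t)) * g σ := by
  set μ := volume.restrict (Ioc (0:ℝ) t) with hμ
  haveI : IsFiniteMeasure μ := by
    constructor
    rw [hμ, Measure.restrict_apply_univ]
    simp [Real.volume_Ioc]
  set G : ℝ × ℝ → ℝ := fun p => {q : ℝ × ℝ | q.2 ≤ q.1}.indicator
      (fun q => Real.exp (-q.1) * g q.2) p with hG
  have hSmeas : MeasurableSet {q : ℝ × ℝ | q.2 ≤ q.1} :=
    measurableSet_le measurable_snd measurable_fst
  have hgm : AEStronglyMeasurable g μ := hg.1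
  have hmeas : AEStronglyMeasurable G (μ.prod μ) := by
    apply AEStronglyMeasurable.indicator _ hSmeas
    exact ((Real.continuous_exp.comp continuous_neg).comp continuous_fst).aestronglyMeasurable.mul
      hgm.comp_snd
  have hGle : ∀ τ σ : ℝ, |G (τ, σ)| ≤ |Real.exp (-τ) * g σ| := by
    intro τ σ
    simp only [hG, Set.indicator_apply, mem_setOf_eq]
    split_ifs
    · exact le_rfl
    · rw [abs_zero]; exact abs_nonneg _
  have hslice : ∀ τ : ℝ, (fun σ => G (τ, σ)) = (Iic τ).indicator (fun σ => Real.exp (-τ) * g σ) := by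
    intro τ
    funext σ
    simp only [hG, Set.indicator_apply, mem_setOf_eq, mem_Iic]
  have hslice2 : ∀ σ : ℝ, (fun τ => G (τ, σ)) = (Ici σ).indicator (fun τ => Real.exp (-τ) * g σ) := by
    intro σ
    funext τ
    simp only [hG, Set.indicator_apply, mem_setOf_eq, mem_Ici]
  have hint_slice : ∀ τ : ℝ, Integrable (fun σ => G (τ, σ)) μ := by
    intro τ
    rw [hslice τ]
    exact ((hg.const_mul _).indicator measurableSet_Iic)
  have hIntG : Integrable G (μ.prod μ) := by
    rw [integrable_prod_iff hmeas]
    constructor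
    · exact Filter.Eventually.of_forall hint_slice
    · have hbound : ∀ᵐ τ ∂μ, ‖∫ σ, ‖G (τ, σ)‖ ∂μ‖ ≤ ∫ σ in Ioc (0:ℝ) t, ‖g σ‖ := by
        have hae : ∀ᵐ τ ∂μ, τ ∈ Ioc (0:ℝ) t := ae_restrict_mem measurableSet_Ioc
        filter_upwards [hae] with τ hτ
        have h1 : ∀ σ, ‖G (τ, σ)‖ ≤ ‖g σ‖ := by
          intro σ
          rw [Real.norm_eq_abs, Real.norm_eq_abs]
          refine le_trans (hGle τ σ) ?_
          rw [abs_mul, abs_of_pos (Real.exp_pos _)]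
          calc Real.exp (-τ) * |g σ| ≤ 1 * |g σ| := by
                apply mul_le_mul_of_nonneg_right _ (abs_nonneg _)
                exact Real.exp_le_one_iff.2 (by linarith [hτ.1])
            _ = |g σ| := one_mul _
        rw [Real.norm_eq_abs, abs_of_nonneg (integral_nonneg (fun σ => norm_nonneg _))]
        exact integral_mono ((hint_slice τ).norm) hg.norm h1
      refine Integrable.mono' (g := fun _ => ∫ σ in Ioc (0:ℝ) t, ‖g σ‖)
        (integrable_const _) ?_ hbound
      exact (hmeas.norm.integral_prod_right')
  have swap := integral_integral_swap (f := fun τ σ => G (τ, σ)) (by exact hIntG)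
  have lhs_eq : ∫ τ, (∫ σ, G (τ, σ) ∂μ) ∂μ
      = ∫ τ in Ioc (0:ℝ) t, Real.exp (-τ) * (∫ σ in Ioc 0 τ, g σ) := by
    apply setIntegral_congr_fun measurableSet_Ioc
    intro τ hτ
    show (∫ σ, G (τ, σ) ∂μ) = Real.exp (-τ) * ∫ σ in Ioc 0 τ, g σ
    rw [hslice τ, hμ, integral_indicator measurableSet_Iic, Measure.restrict_restrict measurableSet_Iic]
    have : Iic τ ∩ Ioc 0 t = Ioc 0 τ := by
      ext σ; simp only [mem_inter_iff, mem_Iic, mem_Ioc]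
      constructor
      · rintro ⟨h1, h2, h3⟩; exact ⟨h2, h1⟩
      · rintro ⟨h1, h2⟩; exact ⟨h2, h1, le_trans h2 hτ.2⟩
    rw [this, integral_const_mul]
  have rhs_eq : ∫ σ, (∫ τ, G (τ, σ) ∂μ) ∂μ
      = ∫ σ in Ioc (0:ℝ) t, (Real.exp (-σ) - Real.exp (-t)) * g σ := by
    apply setIntegral_congr_fun measurableSet_Ioc
    intro σ hσ
    show (∫ τ, G (τ, σ) ∂μ) = (Real.exp (-σ) - Real.exp (-t)) * g σ
    rw [hslice2 σ, hμ, integral_indicator measurableSet_Ici, Measure.restrict_restrict measurableSet_Ici]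
    have : Ici σ ∩ Ioc 0 t = Icc σ t := by
      ext τ; simp only [mem_inter_iff, mem_Ici, mem_Ioc, mem_Icc]
      constructor
      · rintro ⟨h1, h2, h3⟩; exact ⟨h1, h3⟩
      · rintro ⟨h1, h2⟩; exact ⟨h1, lt_of_lt_of_le hσ.1 h1, h2⟩
    rw [this, integral_Icc_eq_integral_Ioc]
    rw [integral_mul_const]
    rw [exp_neg_Ioc_integral hσ.2]
  rw [← lhs_eq, ← rhs_eq]
  exact swap

theorem chain_ineq {H : Type*} [NormedAddCommGroup H] [InnerProductSpace ℝ H] [CompleteSpace H]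
    (P : H → H) (hPlip : ∀ a b : H, ‖P a - P b‖ ≤ 2 * ‖a - b‖)
    (hA4 : ∀ a b : H, ‖P a‖^2 ≤ ‖P b‖^2 + 2*⟪P b, a - b⟫ + ‖a - b‖^2)
    (w v : ℝ → H) (t : ℝ) (ht : 0 < t)
    (hvi : IntegrableOn v (Ioc 0 t))
    (hv2 : IntegrableOn (fun σ => ‖v σ‖^2) (Ioc 0 t))
    (hstep : ∀ s u : ℝ, 0 ≤ s → s ≤ u → u ≤ t → w u - w s = ∫ τ in Ioc s u, v τ)
    (hwc : ContinuousOn w (Icc 0 t)) :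
    ‖P (w t)‖^2 - ‖P (w 0)‖^2 ≤ ∫ τ in Ioc 0 t, 2 * ⟪P (w τ), v τ⟫ := by
  have hPcont : Continuous P := by
    have : LipschitzWith 2 P := by
      apply LipschitzWith.of_dist_le_mul
      intro a b
      rw [dist_eq_norm, dist_eq_norm]
      simpa using hPlip a b
    exact this.continuous
  have hPwc : ContinuousOn (fun s => P (w s)) (Icc 0 t) := hPcont.comp_continuousOn hwc
  obtain ⟨C, hC⟩ := isCompact_Icc.exists_bound_of_continuousOn hPwc
  have hC0 : 0 ≤ C := le_trans (norm_nonneg _) (hC 0 ⟨le_rfl, ht.le⟩)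
  set q : ℝ → ℝ := fun σ => 2 * ⟪P (w σ), v σ⟫ with hq
  have hqm : AEStronglyMeasurable q (volume.restrict (Ioc 0 t)) := by
    apply AEStronglyMeasurable.const_mul
    exact AEStronglyMeasurable.inner
      ((hPwc.mono Ioc_subset_Icc_self).aestronglyMeasurable measurableSet_Ioc) hvi.1
  have hq_int : IntegrableOn q (Ioc 0 t) := by
    apply Integrable.mono' (hvi.norm.const_mul (2*C)) hqm
    filter_upwards [ae_restrict_mem measurableSet_Ioc] with σ hσ
    rw [hq, Real.norm_eq_abs, abs_mul, abs_two]
    calc 2 * |⟪P (w σ), v σ⟫| ≤ 2 * (‖P (w σ)‖ * ‖v σ‖) := by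
          apply mul_le_mul_of_nonneg_left (abs_real_inner_le_norm _ _) (by norm_num)
      _ ≤ 2 * (C * ‖v σ‖) := by
          apply mul_le_mul_of_nonneg_left _ (by norm_num)
          exact mul_le_mul_of_nonneg_right (hC σ (Ioc_subset_Icc_self hσ)) (norm_nonneg _)
      _ = 2 * C * ‖v σ‖ := by ring
  set M := ∫ σ in Ioc 0 t, ‖v σ‖^2 with hM
  have hM0 : 0 ≤ M := setIntegral_nonneg measurableSet_Ioc (fun σ _ => sq_nonneg _)
  have key : ∀ N : ℕ, 0 < N →
      ‖P (w t)‖^2 - ‖P (w 0)‖^2 ≤ (∫ τ in Ioc 0 t, q τ) + 5 * (t/N) * M := by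
    intro N hN
    have hNR : (0:ℝ) < N := Nat.cast_pos.2 hN
    set Δ := t / N with hΔdef
    have hΔ : 0 < Δ := div_pos ht hNR
    set p : ℕ → ℝ := fun i => i * Δ with hpdef
    have hp0 : p 0 = 0 := by simp [hpdef]
    have hpN : p N = t := by
      rw [hpdef]; field_simp [hΔdef]; rw [hΔdef]; field_simp [hNR.ne']
    have hpmono : Monotone p := by
      intro i j hij
      exact mul_le_mul_of_nonneg_right (Nat.cast_le.2 hij) hΔ.le
    have hpmem : ∀ i, i ≤ N → p i ∈ Icc (0:ℝ) t := by
      intro i hi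
      refine ⟨by positivity, ?_⟩
      rw [← hpN]; exact hpmono hi
    have hq_int' : IntegrableOn q (Ioc (p 0) (p N)) := by rw [hp0, hpN]; exact hq_int
    have hv2' : IntegrableOn (fun σ => ‖v σ‖^2) (Ioc (p 0) (p N)) := by
      rw [hp0, hpN]; exact hv2
    have perstep : ∀ i, i < N →
        ‖P (w (p (i+1)))‖^2 - ‖P (w (p i))‖^2
          ≤ (∫ τ in Ioc (p i) (p (i+1)), q τ) + 5 * Δ * ∫ τ in Ioc (p i) (p (i+1)), ‖v τ‖^2 := by
      intro i hi
      have hi1 : p i ∈ Icc (0:ℝ) t := hpmem i hi.le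
      have hi2 : p (i+1) ∈ Icc (0:ℝ) t := hpmem (i+1) hi
      have hple : p i ≤ p (i+1) := hpmono (Nat.le_succ i)
      have hsubset : Ioc (p i) (p (i+1)) ⊆ Ioc 0 t := Ioc_subset_Ioc hi1.1 hi2.2
      have hvi_i : IntegrableOn v (Ioc (p i) (p (i+1))) := hvi.mono_set hsubset
      have hv2_i : IntegrableOn (fun σ => ‖v σ‖^2) (Ioc (p i) (p (i+1))) := hv2.mono_set hsubset
      have hq_i : IntegrableOn q (Ioc (p i) (p (i+1))) := hq_int.mono_set hsubset
      have hab : w (p (i+1)) - w (p i) = ∫ τ in Ioc (p i) (p (i+1)), v τ :=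
        hstep _ _ hi1.1 hple hi2.2
      set ai := ∫ τ in Ioc (p i) (p (i+1)), ‖v τ‖ with hai
      have hai0 : 0 ≤ ai := setIntegral_nonneg measurableSet_Ioc (fun σ _ => norm_nonneg _)
      have h_norm_ab : ‖w (p (i+1)) - w (p i)‖ ≤ ai := by
        rw [hab, hai]; exact norm_integral_le_integral_norm _
      -- distance bound inside the interval
      have hdist : ∀ σ ∈ Ioc (p i) (p (i+1)), ‖w σ - w (p i)‖ ≤ ai := by
        intro σ hσ
        have hσt : σ ≤ t := le_trans hσ.2 hi2.2
        have : w σ - w (p i) = ∫ τ in Ioc (p i) σ, v τ := hstep _ _ hi1.1 hσ.1.le hσt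
        rw [this]
        calc ‖∫ τ in Ioc (p i) σ, v τ‖ ≤ ∫ τ in Ioc (p i) σ, ‖v τ‖ :=
              norm_integral_le_integral_norm _
          _ ≤ ai := by
              rw [hai]
              apply setIntegral_mono_set hvi_i.norm
              · exact Filter.Eventually.of_forall (fun σ => norm_nonneg _)
              · exact HasSubset.Subset.eventuallyLE (Ioc_subset_Ioc le_rfl hσ.2)
      -- pointwise comparison on the small interval
      have hpoint : ∀ σ ∈ Ioc (p i) (p (i+1)),
          2 * ⟪P (w (p i)), v σ⟫ ≤ q σ + (4 * ai) * ‖v σ‖ := by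
        intro σ hσ
        have e : ⟪P (w (p i)), v σ⟫ = ⟪P (w σ), v σ⟫ + ⟪P (w (p i)) - P (w σ), v σ⟫ := by
          rw [← inner_add_left]; congr 1; abel
        have hb : ⟪P (w (p i)) - P (w σ), v σ⟫ ≤ (2 * ai) * ‖v σ‖ := by
          calc ⟪P (w (p i)) - P (w σ), v σ⟫ ≤ ‖P (w (p i)) - P (w σ)‖ * ‖v σ‖ :=
                real_inner_le_norm _ _
            _ ≤ (2 * ‖w (p i) - w σ‖) * ‖v σ‖ :=
                mul_le_mul_of_nonneg_right (hPlip _ _) (norm_nonneg _)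
            _ ≤ (2 * ai) * ‖v σ‖ := by
                apply mul_le_mul_of_nonneg_right _ (norm_nonneg _)
                apply mul_le_mul_of_nonneg_left _ (by norm_num)
                rw [norm_sub_rev]
                exact hdist σ hσ
        have hqσ : q σ = 2 * ⟪P (w σ), v σ⟫ := rfl
        rw [hqσ, e]
        nlinarith [hb]
      -- integral of constant-inner term
      have hconstint : 2 * ⟪P (w (p i)), w (p (i+1)) - w (p i)⟫
          = ∫ σ in Ioc (p i) (p (i+1)), 2 * ⟪P (w (p i)), v σ⟫ := by
        rw [hab, ← integral_inner hvi_i, ← integral_const_mul]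
      have hintmono : ∫ σ in Ioc (p i) (p (i+1)), 2 * ⟪P (w (p i)), v σ⟫
          ≤ ∫ σ in Ioc (p i) (p (i+1)), (q σ + (4 * ai) * ‖v σ‖) := by
        apply setIntegral_mono_on
        · exact (hvi_i.const_inner _).const_mul 2
        · exact hq_i.add (hvi_i.norm.const_mul _)
        · exact measurableSet_Ioc
        · exact hpoint
      have hsplit : ∫ σ in Ioc (p i) (p (i+1)), (q σ + (4 * ai) * ‖v σ‖)
          = (∫ σ in Ioc (p i) (p (i+1)), q σ) + (4 * ai) * ai := by
        rw [integral_add hq_i (hvi_i.norm.const_mul _)]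
        congr 1
        exact integral_const_mul _ _
      have hcs : ai^2 ≤ Δ * ∫ σ in Ioc (p i) (p (i+1)), ‖v σ‖^2 := by
        have := cs_sq hple hvi_i.norm hv2_i (fun σ => norm_nonneg _)
        have hd : p (i+1) - p i = Δ := by
          rw [hpdef]; push_cast; ring
        rw [hd] at this
        exact this
      have ha4 := hA4 (w (p (i+1))) (w (p i))
      have hsq : ‖w (p (i+1)) - w (p i)‖^2 ≤ ai^2 := by
        apply pow_le_pow_left₀ (norm_nonneg _) h_norm_ab
      have hvint_nonneg : 0 ≤ ∫ σ in Ioc (p i) (p (i+1)), ‖v σ‖^2 :=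
        setIntegral_nonneg measurableSet_Ioc (fun σ _ => sq_nonneg _)
      nlinarith [hconstint, hintmono, hsplit, hcs, ha4, hsq]
    -- sum over the partition
    have htel : ∑ i ∈ Finset.range N, (‖P (w (p (i+1)))‖^2 - ‖P (w (p i))‖^2)
        = ‖P (w t)‖^2 - ‖P (w 0)‖^2 := by
      rw [Finset.sum_range_sub (fun i => ‖P (w (p i))‖^2) N, hp0, hpN]
    have hsum1 : ∑ i ∈ Finset.range N, ∫ τ in Ioc (p i) (p (i+1)), q τ
        = ∫ τ in Ioc 0 t, q τ := by
      rw [sum_Ioc q p hpmono N hq_int', hp0, hpN]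
    have hsum2 : ∑ i ∈ Finset.range N, ∫ τ in Ioc (p i) (p (i+1)), ‖v τ‖^2 = M := by
      rw [sum_Ioc _ p hpmono N hv2', hp0, hpN, hM]
    have hsumle : ∑ i ∈ Finset.range N, (‖P (w (p (i+1)))‖^2 - ‖P (w (p i))‖^2)
        ≤ ∑ i ∈ Finset.range N, ((∫ τ in Ioc (p i) (p (i+1)), q τ)
            + 5 * Δ * ∫ τ in Ioc (p i) (p (i+1)), ‖v τ‖^2) := by
      apply Finset.sum_le_sum
      intro i hi
      exact perstep i (Finset.mem_range.1 hi)
    rw [htel] at hsumle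
    rw [Finset.sum_add_distrib, hsum1, ← Finset.mul_sum, hsum2] at hsumle
    exact hsumle
  -- take the limit N → ∞
  apply le_of_forall_pos_le_add
  intro ε hε
  obtain ⟨n, hn⟩ := exists_nat_gt (5 * t * M / ε)
  set N := max n 1 with hNdef
  have hN1 : 0 < N := lt_of_lt_of_le one_pos (le_max_right n 1)
  have hNR : (0:ℝ) < N := Nat.cast_pos.2 hN1
  have hNn : (n:ℝ) ≤ N := Nat.cast_le.2 (le_max_left n 1)
  have hlt : 5 * (t / N) * M < ε := by
    have h1 : 5 * t * M / ε < N := lt_of_lt_of_le hn hNn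
    rw [div_lt_iff₀ hε] at h1
    have he : 5 * (t / N) * M = 5 * t * M / N := by ring
    rw [he, div_lt_iff₀ hNR]
    linarith
  calc ‖P (w t)‖^2 - ‖P (w 0)‖^2 ≤ (∫ τ in Ioc 0 t, q τ) + 5 * (t/N) * M := key N hN1
    _ ≤ (∫ τ in Ioc 0 t, q τ) + ε := by linarith


/-- for two solutions of the evolution equation `U' + ∂Ψ(U) ∋ Θ` governed by
a proper l.s.c. convex Ψ with K-monotone (T-monotone) subdifferential, writing
`P w = w - π_K w`, it holds
`|P(U¹-U²)(t)|² ≤ e^t |P(U₀¹-U₀²)|² + ∫₀ᵗ e^{t-τ} |P(Θ¹-Θ²)(τ)|² dτ`. -/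
theorem stmt9 {H : Type*} [NormedAddCommGroup H] [InnerProductSpace ℝ H] [CompleteSpace H]
    (T : ℝ) (hT : 0 < T)
    (Ψ : H → EReal) (hProper : ProperFn Ψ) (hLsc : LowerSemicontinuous Ψ)
    (hConv : ConvexFn Ψ)
    (K : Set H) (hKc : IsClosed K) (hKconv : Convex ℝ K) (hK0 : (0:H) ∈ K)
    (hKcone : ∀ c : ℝ, 0 ≤ c → ∀ x ∈ K, c • x ∈ K)
    (π : H → H) (hπ : ∀ x : H, π x ∈ K ∧ ∀ y ∈ K, ‖x - π x‖ ≤ ‖x - y‖)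
    (hTmono : ∀ z₁ z₁s z₂ z₂s : H, InSubdiff Ψ z₁ z₁s → InSubdiff Ψ z₂ z₂s →
      0 ≤ ⟪z₁s - z₂s, (z₁ - z₂) - π (z₁ - z₂)⟫)
    (U₁ U₂ U₁' U₂' Θ₁ Θ₂ : ℝ → H)
    (hΘ₁ : MemLp Θ₁ 2 (volume.restrict (Set.Ioc 0 T)))
    (hΘ₂ : MemLp Θ₂ 2 (volume.restrict (Set.Ioc 0 T)))
    (hU₁' : MemLp U₁' 2 (volume.restrict (Set.Ioc 0 T)))
    (hU₂' : MemLp U₂' 2 (volume.restrict (Set.Ioc 0 T)))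
    (hAC₁ : ∀ t ∈ Set.Icc (0:ℝ) T, U₁ t = U₁ 0 + ∫ τ in Set.Ioc (0:ℝ) t, U₁' τ)
    (hAC₂ : ∀ t ∈ Set.Icc (0:ℝ) T, U₂ t = U₂ 0 + ∫ τ in Set.Ioc (0:ℝ) t, U₂' τ)
    (hEv₁ : ∀ᵐ t : ℝ, t ∈ Set.Ioo 0 T →
      HasDerivAt U₁ (U₁' t) t ∧ InSubdiff Ψ (U₁ t) (Θ₁ t - U₁' t))
    (hEv₂ : ∀ᵐ t : ℝ, t ∈ Set.Ioo 0 T →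
      HasDerivAt U₂ (U₂' t) t ∧ InSubdiff Ψ (U₂ t) (Θ₂ t - U₂' t)) :
    ∀ t ∈ Set.Icc (0:ℝ) T,
      ‖(U₁ t - U₂ t) - π (U₁ t - U₂ t)‖^2
        ≤ Real.exp t * ‖(U₁ 0 - U₂ 0) - π (U₁ 0 - U₂ 0)‖^2 +
          ∫ τ in Set.Ioc (0:ℝ) t,
            Real.exp (t - τ) * ‖(Θ₁ τ - Θ₂ τ) - π (Θ₁ τ - Θ₂ τ)‖^2 := by
  haveI hfinT : IsFiniteMeasure (volume.restrict (Ioc (0:ℝ) T)) := by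
    constructor
    rw [Measure.restrict_apply_univ]
    simp [Real.volume_Ioc]
  -- abbreviations (plain definitions, no `set`, to keep the goal syntactic)
  let w : ℝ → H := fun s => U₁ s - U₂ s
  let v : ℝ → H := fun s => U₁' s - U₂' s
  let f : ℝ → ℝ := fun s => ‖(U₁ s - U₂ s) - π (U₁ s - U₂ s)‖^2
  let h : ℝ → ℝ := fun τ => ‖(Θ₁ τ - Θ₂ τ) - π (Θ₁ τ - Θ₂ τ)‖^2
  let g : ℝ → ℝ := fun τ => f τ + h τ
  -- Lipschitz property of P x = x - π x
  have hPlip : ∀ a b : H, ‖(a - π a) - (b - π b)‖ ≤ 2 * ‖a - b‖ := by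
    intro a b
    have e : (a - π a) - (b - π b) = (a - b) - (π a - π b) := by abel
    rw [e]
    calc ‖(a - b) - (π a - π b)‖ ≤ ‖a - b‖ + ‖π a - π b‖ := norm_sub_le _ _
      _ ≤ ‖a - b‖ + ‖a - b‖ := by linarith [proj_lip hKconv hπ a b]
      _ = 2 * ‖a - b‖ := by ring
  have hPlipW : LipschitzWith 2 (fun x : H => x - π x) := by
    apply LipschitzWith.of_dist_le_mul
    intro a b
    rw [dist_eq_norm, dist_eq_norm]
    simpa using hPlip a b
  have hP0 : (fun x : H => x - π x) 0 = 0 := by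
    simp only
    rw [proj_zero hK0 hπ, sub_zero]
  -- integrability of v, ‖v‖², h
  have sq_int : ∀ {u : ℝ → H}, MemLp u 2 (volume.restrict (Ioc (0:ℝ) T)) →
      IntegrableOn (fun σ => ‖u σ‖^2) (Ioc (0:ℝ) T) := by
    intro u hu
    have h1 := hu.integrable_norm_rpow (by norm_num) (by norm_num)
    have e : (fun σ => ‖u σ‖ ^ ((2:ℝ≥0∞).toReal)) = fun σ => ‖u σ‖^2 := by
      funext σ
      rw [show ((2:ℝ≥0∞).toReal) = ((2:ℕ):ℝ) by simp, Real.rpow_natCast]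
    rwa [e] at h1
  have hvmem : MemLp v 2 (volume.restrict (Ioc (0:ℝ) T)) := hU₁'.sub hU₂'
  have hvT : IntegrableOn v (Ioc (0:ℝ) T) := hvmem.integrable one_le_two
  have hv2T : IntegrableOn (fun σ => ‖v σ‖^2) (Ioc (0:ℝ) T) := sq_int hvmem
  have hθmem : MemLp (fun τ => Θ₁ τ - Θ₂ τ) 2 (volume.restrict (Ioc (0:ℝ) T)) :=
    hΘ₁.sub hΘ₂
  have hPθmem : MemLp ((fun x : H => x - π x) ∘ (fun τ => Θ₁ τ - Θ₂ τ)) 2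
      (volume.restrict (Ioc (0:ℝ) T)) := hPlipW.comp_memLp hP0 hθmem
  have hhT : IntegrableOn h (Ioc (0:ℝ) T) := sq_int hPθmem
  have hU₁i : IntegrableOn U₁' (Ioc (0:ℝ) T) := hU₁'.integrable one_le_two
  have hU₂i : IntegrableOn U₂' (Ioc (0:ℝ) T) := hU₂'.integrable one_le_two
  -- increments
  have hinc : ∀ (F : ℝ → H) (F' : ℝ → H),
      (∀ x ∈ Icc (0:ℝ) T, F x = F 0 + ∫ τ in Ioc (0:ℝ) x, F' τ) →
      IntegrableOn F' (Ioc (0:ℝ) T) →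
      ∀ s u : ℝ, 0 ≤ s → s ≤ u → u ≤ T → F u - F s = ∫ τ in Ioc s u, F' τ := by
    intro F F' hAC hFi s u hs hsu hu
    have hsT : s ≤ T := le_trans hsu hu
    rw [hAC u ⟨le_trans hs hsu, hu⟩, hAC s ⟨hs, hsT⟩]
    have hunion : ∫ τ in Ioc (0:ℝ) u, F' τ
        = (∫ τ in Ioc (0:ℝ) s, F' τ) + ∫ τ in Ioc s u, F' τ := by
      rw [← setIntegral_union (Ioc_disjoint_Ioc_of_le le_rfl) measurableSet_Ioc
        (hFi.mono_set (Ioc_subset_Ioc le_rfl hsT))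
        (hFi.mono_set (Ioc_subset_Ioc hs hu)),
        Ioc_union_Ioc_eq_Ioc hs hsu]
    rw [hunion]; abel
  have hstepT : ∀ s u : ℝ, 0 ≤ s → s ≤ u → u ≤ T →
      w u - w s = ∫ τ in Ioc s u, v τ := by
    intro s u hs hsu hu
    have h1 := hinc U₁ U₁' hAC₁ hU₁i s u hs hsu hu
    have h2 := hinc U₂ U₂' hAC₂ hU₂i s u hs hsu hu
    have e : w u - w s = (U₁ u - U₁ s) - (U₂ u - U₂ s) := by
      show (U₁ u - U₂ u) - (U₁ s - U₂ s) = _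
      abel
    rw [e, h1, h2, ← integral_sub (hU₁i.mono_set (Ioc_subset_Ioc hs hu))
      (hU₂i.mono_set (Ioc_subset_Ioc hs hu))]
  -- continuity of w and f on [0,T]
  have hwc : ContinuousOn w (Icc (0:ℝ) T) := by
    have hvi' : IntegrableOn v (Icc (0:ℝ) T) :=
      (integrableOn_Icc_iff_integrableOn_Ioc (by simp)).2 hvT
    have hc : ContinuousOn (fun x => w 0 + ∫ τ in Ioc (0:ℝ) x, v τ) (Icc (0:ℝ) T) :=
      continuousOn_const.add (intervalIntegral.continuousOn_primitive hvi')
    apply hc.congr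
    intro x hx
    have hx0 := hstepT 0 x le_rfl hx.1 hx.2
    show w x = w 0 + ∫ τ in Ioc (0:ℝ) x, v τ
    rw [← hx0]; abel
  have hPwc : ContinuousOn (fun s => w s - π (w s)) (Icc (0:ℝ) T) :=
    hPlipW.continuous.comp_continuousOn hwc
  have hfc : ContinuousOn f (Icc (0:ℝ) T) := hPwc.norm.pow 2
  have hfT : IntegrableOn f (Ioc (0:ℝ) T) :=
    (hfc.integrableOn_Icc).mono_set Ioc_subset_Icc_self
  have hgT : IntegrableOn g (Ioc (0:ℝ) T) := hfT.add hhT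
  -- integrability of q
  obtain ⟨C, hC⟩ := isCompact_Icc.exists_bound_of_continuousOn hPwc
  have hC0 : 0 ≤ C := le_trans (norm_nonneg _) (hC 0 ⟨le_rfl, hT.le⟩)
  have hqm : AEStronglyMeasurable (fun σ => 2 * ⟪w σ - π (w σ), v σ⟫)
      (volume.restrict (Ioc (0:ℝ) T)) := by
    apply AEStronglyMeasurable.const_mul
    exact AEStronglyMeasurable.inner
      ((hPwc.mono Ioc_subset_Icc_self).aestronglyMeasurable measurableSet_Ioc) hvT.1
  have hqT : IntegrableOn (fun σ => 2 * ⟪w σ - π (w σ), v σ⟫) (Ioc (0:ℝ) T) := by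
    apply Integrable.mono' (hvT.norm.const_mul (2*C)) hqm
    filter_upwards [ae_restrict_mem measurableSet_Ioc] with σ hσ
    rw [Real.norm_eq_abs, abs_mul, abs_two]
    calc 2 * |⟪w σ - π (w σ), v σ⟫| ≤ 2 * (‖w σ - π (w σ)‖ * ‖v σ‖) := by
          apply mul_le_mul_of_nonneg_left (abs_real_inner_le_norm _ _) (by norm_num)
      _ ≤ 2 * (C * ‖v σ‖) := by
          apply mul_le_mul_of_nonneg_left _ (by norm_num)
          exact mul_le_mul_of_nonneg_right (hC σ (Ioc_subset_Icc_self hσ)) (norm_nonneg _)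
      _ = 2 * C * ‖v σ‖ := by ring
  -- a.e. pointwise bound  q ≤ f + h  on (0,T)
  have hae_bound : ∀ᵐ σ : ℝ, σ ∈ Ioo 0 T →
      2 * ⟪w σ - π (w σ), v σ⟫ ≤ f σ + h σ := by
    filter_upwards [hEv₁, hEv₂] with σ h1 h2 hσ
    obtain ⟨_, hsub₁⟩ := h1 hσ
    obtain ⟨_, hsub₂⟩ := h2 hσ
    have hmono := hTmono (U₁ σ) (Θ₁ σ - U₁' σ) (U₂ σ) (Θ₂ σ - U₂' σ) hsub₁ hsub₂
    set θ : H := Θ₁ σ - Θ₂ σ with hθdef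
    set Pw : H := w σ - π (w σ) with hPwdef
    have e1 : (Θ₁ σ - U₁' σ) - (Θ₂ σ - U₂' σ) = θ - v σ := by
      rw [hθdef]; show _ = (Θ₁ σ - Θ₂ σ) - (U₁' σ - U₂' σ); abel
    rw [e1] at hmono
    have hmono' : ⟪v σ, Pw⟫ ≤ ⟪θ, Pw⟫ := by
      have := hmono
      rw [inner_sub_left] at this
      linarith
    have hsplit : ⟪θ, Pw⟫ = ⟪π θ, Pw⟫ + ⟪θ - π θ, Pw⟫ := by
      rw [← inner_add_left]
      congr 1
      abel
    have hpolar : ⟪Pw, π θ⟫ ≤ 0 :=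
      proj_polar hKconv hK0 hKcone hπ (w σ) (hπ θ).1
    have hpolar' : ⟪π θ, Pw⟫ ≤ 0 := by rwa [real_inner_comm] at hpolar
    have hcs : ⟪θ - π θ, Pw⟫ ≤ ‖θ - π θ‖ * ‖Pw‖ := real_inner_le_norm _ _
    have hyoung : ‖θ - π θ‖ * ‖Pw‖ ≤ (‖θ - π θ‖^2 + ‖Pw‖^2) / 2 := by
      nlinarith [sq_nonneg (‖θ - π θ‖ - ‖Pw‖)]
    have hfσ : f σ = ‖Pw‖^2 := rfl
    have hhσ : h σ = ‖θ - π θ‖^2 := rfl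
    have hinner_comm : ⟪Pw, v σ⟫ = ⟪v σ, Pw⟫ := real_inner_comm _ _
    rw [hfσ, hhσ]
    have : ⟪Pw, v σ⟫ ≤ (‖θ - π θ‖^2 + ‖Pw‖^2) / 2 := by
      rw [hinner_comm]
      calc ⟪v σ, Pw⟫ ≤ ⟪θ, Pw⟫ := hmono'
        _ = ⟪π θ, Pw⟫ + ⟪θ - π θ, Pw⟫ := hsplit
        _ ≤ 0 + ‖θ - π θ‖ * ‖Pw‖ := add_le_add hpolar' hcs
        _ ≤ (‖θ - π θ‖^2 + ‖Pw‖^2) / 2 := by linarith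
    linarith
  -- main integral inequality: f s ≤ f 0 + ∫₀ˢ g
  have hkey : ∀ s ∈ Icc (0:ℝ) T, f s ≤ f 0 + ∫ τ in Ioc (0:ℝ) s, g τ := by
    intro s hs
    rcases eq_or_lt_of_le hs.1 with hs0 | hs0
    · rw [← hs0]
      simp
    · have hchain := chain_ineq (fun x => x - π x) hPlip
        (fun a b => proj_A4 hπ a b) w v s hs0
        (hvT.mono_set (Ioc_subset_Ioc le_rfl hs.2))
        (hv2T.mono_set (Ioc_subset_Ioc le_rfl hs.2))
        (fun a b ha hab hbs => hstepT a b ha hab (le_trans hbs hs.2))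
        (hwc.mono (Icc_subset_Icc_right hs.2))
      have hmono_int : ∫ τ in Ioc (0:ℝ) s, 2 * ⟪w τ - π (w τ), v τ⟫
          ≤ ∫ τ in Ioc (0:ℝ) s, g τ := by
        apply integral_mono_ae (hqT.mono_set (Ioc_subset_Ioc le_rfl hs.2))
          (hgT.mono_set (Ioc_subset_Ioc le_rfl hs.2))
        have hmem := ae_restrict_mem (μ := volume) (s := Ioc (0:ℝ) s) measurableSet_Ioc
        have hne : ∀ᵐ σ : ℝ ∂volume.restrict (Ioc (0:ℝ) s), σ ≠ T := by
          apply ae_restrict_of_ae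
          rw [ae_iff]
          simpa using measure_singleton T
        filter_upwards [hmem, hne, ae_restrict_of_ae hae_bound] with σ hσ hσT hb
        exact hb ⟨hσ.1, lt_of_le_of_ne (le_trans hσ.2 hs.2) hσT⟩
      have : f s - f 0 ≤ ∫ τ in Ioc (0:ℝ) s, g τ := le_trans hchain hmono_int
      linarith
  -- Gronwall step
  intro t htmem
  rcases eq_or_lt_of_le htmem.1 with ht0 | ht0
  · rw [← ht0]
    simp
  · -- notation
    have htT : t ≤ T := htmem.2
    have hgt : IntegrableOn g (Ioc (0:ℝ) t) := hgT.mono_set (Ioc_subset_Ioc le_rfl htT)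
    have hht : IntegrableOn h (Ioc (0:ℝ) t) := hhT.mono_set (Ioc_subset_Ioc le_rfl htT)
    let y : ℝ → ℝ := fun r => ∫ τ in Ioc (0:ℝ) r, g τ
    have hyc : ContinuousOn y (Icc (0:ℝ) t) :=
      intervalIntegral.continuousOn_primitive ((integrableOn_Icc_iff_integrableOn_Ioc (by simp)).2 hgt)
    -- integrability of exp-weighted integrands
    have hexp_mul : ∀ {u : ℝ → ℝ}, IntegrableOn u (Ioc (0:ℝ) t) →
        IntegrableOn (fun τ => Real.exp (-τ) * u τ) (Ioc (0:ℝ) t) := by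
      intro u hu
      apply Integrable.mono' hu.norm
        ((Real.continuous_exp.comp continuous_neg).aestronglyMeasurable.mul hu.1)
      filter_upwards [ae_restrict_mem measurableSet_Ioc] with τ hτ
      show ‖Real.exp (-τ) * u τ‖ ≤ ‖u τ‖
      rw [Real.norm_eq_abs, abs_mul, abs_of_pos (Real.exp_pos _), Real.norm_eq_abs]
      calc Real.exp (-τ) * |u τ| ≤ 1 * |u τ| := by
            apply mul_le_mul_of_nonneg_right _ (abs_nonneg _)
            exact Real.exp_le_one_iff.2 (by linarith [hτ.1])
        _ = |u τ| := one_mul _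
    have hey : IntegrableOn (fun τ => Real.exp (-τ) * y τ) (Ioc (0:ℝ) t) := by
      have : ContinuousOn (fun τ => Real.exp (-τ) * y τ) (Icc (0:ℝ) t) :=
        ((Real.continuous_exp.comp continuous_neg).continuousOn).mul hyc
      exact this.integrableOn_Icc.mono_set Ioc_subset_Icc_self
    have heg : IntegrableOn (fun τ => Real.exp (-τ) * g τ) (Ioc (0:ℝ) t) := hexp_mul hgt
    have heh : IntegrableOn (fun τ => Real.exp (-τ) * h τ) (Ioc (0:ℝ) t) := hexp_mul hht
    -- Fubini
    have hfub := fubini_exp ht0.le hgt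
    have hrhs : ∫ σ in Ioc (0:ℝ) t, (Real.exp (-σ) - Real.exp (-t)) * g σ
        = (∫ σ in Ioc (0:ℝ) t, Real.exp (-σ) * g σ) - Real.exp (-t) * y t := by
      have e : (fun σ => (Real.exp (-σ) - Real.exp (-t)) * g σ)
          = fun σ => Real.exp (-σ) * g σ - Real.exp (-t) * g σ := by
        funext σ; ring
      rw [e, integral_sub heg (hgt.const_mul _), integral_const_mul]
    have hl : ∫ τ in Ioc (0:ℝ) t, Real.exp (-τ) * y τ
        = (∫ σ in Ioc (0:ℝ) t, Real.exp (-σ) * g σ) - Real.exp (-t) * y t := by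
      have e0 : (fun τ => Real.exp (-τ) * y τ)
          = (fun τ => Real.exp (-τ) * ∫ σ in Ioc (0:ℝ) τ, g σ) := rfl
      rw [e0, hfub, hrhs]
    have hid : Real.exp (-t) * y t
        = ∫ τ in Ioc (0:ℝ) t, Real.exp (-τ) * (g τ - y τ) := by
      have e : (fun τ => Real.exp (-τ) * (g τ - y τ))
          = fun τ => Real.exp (-τ) * g τ - Real.exp (-τ) * y τ := by
        funext τ; ring
      rw [e, integral_sub heg hey, hl]
      ring
    -- bound the right-hand side
    have hbound : ∫ τ in Ioc (0:ℝ) t, Real.exp (-τ) * (g τ - y τ)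
        ≤ ∫ τ in Ioc (0:ℝ) t, Real.exp (-τ) * (f 0 + h τ) := by
      apply setIntegral_mono_on
      · exact (hexp_mul hgt).sub hey
        |>.congr (Filter.EventuallyEq.of_eq (by funext τ; simp only [Pi.sub_apply]; ring))
      · have : IntegrableOn (fun τ => Real.exp (-τ) * f 0 + Real.exp (-τ) * h τ)
            (Ioc (0:ℝ) t) := by
          apply Integrable.add _ heh
          have : ContinuousOn (fun τ => Real.exp (-τ) * f 0) (Icc (0:ℝ) t) :=
            ((Real.continuous_exp.comp continuous_neg).continuousOn).mul continuousOn_const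
          exact this.integrableOn_Icc.mono_set Ioc_subset_Icc_self
        exact this.congr (Filter.EventuallyEq.of_eq (by funext τ; ring))
      · exact measurableSet_Ioc
      · intro τ hτ
        apply mul_le_mul_of_nonneg_left _ (Real.exp_pos _).le
        have hfτ : f τ ≤ f 0 + y τ := hkey τ ⟨hτ.1.le, le_trans hτ.2 htT⟩
        show g τ - y τ ≤ f 0 + h τ
        have : g τ = f τ + h τ := rfl
        rw [this]
        linarith
    -- compute the majorant integral
    have hconst_int : ∫ τ in Ioc (0:ℝ) t, Real.exp (-τ) * (f 0 + h τ)
        = f 0 * (1 - Real.exp (-t)) + ∫ τ in Ioc (0:ℝ) t, Real.exp (-τ) * h τ := by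
      have e : (fun τ => Real.exp (-τ) * (f 0 + h τ))
          = fun τ => f 0 * Real.exp (-τ) + Real.exp (-τ) * h τ := by
        funext τ; ring
      have hconst : IntegrableOn (fun τ => f 0 * Real.exp (-τ)) (Ioc (0:ℝ) t) := by
        have : ContinuousOn (fun τ => f 0 * Real.exp (-τ)) (Icc (0:ℝ) t) :=
          continuousOn_const.mul ((Real.continuous_exp.comp continuous_neg).continuousOn)
        exact this.integrableOn_Icc.mono_set Ioc_subset_Icc_self
      rw [e, integral_add hconst heh, integral_const_mul, exp_neg_Ioc_integral ht0.le]
      rw [neg_zero, Real.exp_zero]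
    have hyt : Real.exp (-t) * y t
        ≤ f 0 * (1 - Real.exp (-t)) + ∫ τ in Ioc (0:ℝ) t, Real.exp (-τ) * h τ := by
      rw [hid]
      exact le_trans hbound (le_of_eq hconst_int)
    -- multiply by exp t
    have hexppos : (0:ℝ) < Real.exp t := Real.exp_pos t
    have hyt' : y t ≤ f 0 * (Real.exp t - 1)
        + ∫ τ in Ioc (0:ℝ) t, Real.exp (t - τ) * h τ := by
      have h1 : Real.exp t * (Real.exp (-t) * y t)
          ≤ Real.exp t * (f 0 * (1 - Real.exp (-t))
            + ∫ τ in Ioc (0:ℝ) t, Real.exp (-τ) * h τ) :=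
        mul_le_mul_of_nonneg_left hyt hexppos.le
      have h2 : Real.exp t * (Real.exp (-t) * y t) = y t := by
        rw [← mul_assoc, ← Real.exp_add, show t + -t = (0:ℝ) from by ring,
          Real.exp_zero, one_mul]
      have h3 : Real.exp t * ∫ τ in Ioc (0:ℝ) t, Real.exp (-τ) * h τ
          = ∫ τ in Ioc (0:ℝ) t, Real.exp (t - τ) * h τ := by
        rw [← integral_const_mul]
        apply setIntegral_congr_fun measurableSet_Ioc
        intro τ hτ
        show Real.exp t * (Real.exp (-τ) * h τ) = Real.exp (t - τ) * h τ
        rw [← mul_assoc, ← Real.exp_add, show t + -τ = t - τ from by ring]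
      have h4 : Real.exp t * (f 0 * (1 - Real.exp (-t))) = f 0 * (Real.exp t - 1) := by
        rw [show Real.exp t * (f 0 * (1 - Real.exp (-t)))
            = f 0 * (Real.exp t - Real.exp t * Real.exp (-t)) from by ring,
          ← Real.exp_add, show t + -t = (0:ℝ) from by ring, Real.exp_zero]
      rw [h2] at h1
      rw [mul_add, h3, h4] at h1
      exact h1
    have hft : f t ≤ f 0 + y t := hkey t htmem
    have hgoal : f t ≤ Real.exp t * f 0 + ∫ τ in Ioc (0:ℝ) t, Real.exp (t - τ) * h τ := by
      have := le_trans hft (by linarith : f 0 + y t ≤ f 0 + (f 0 * (Real.exp t - 1)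
        + ∫ τ in Ioc (0:ℝ) t, Real.exp (t - τ) * h τ))
      calc f t ≤ f 0 + (f 0 * (Real.exp t - 1)
          + ∫ τ in Ioc (0:ℝ) t, Real.exp (t - τ) * h τ) := this
        _ = Real.exp t * f 0 + ∫ τ in Ioc (0:ℝ) t, Real.exp (t - τ) * h τ := by ring
    exact hgoal
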